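/- Let k ≥ 2, let T be a binary phylogenetic X-tree and let T̃ be an NNI neighbor of T. Let [x,y] be a cherry contained in both T and T̃, and let T^1, T̃^1 (resp. T^2, T̃^2) be the trees obtained from T and T̃ by a cherry reduction of type 1 (resp. type 2) applied to [x,y]. If A_k(T^1) = A_k(T̃^1) and A_{k−1}(T^2) = A_{k−1}(T̃^2), then A_k(T) = A_k(T̃). -/

import Mathlib

open SimpleGraph

/-- A binary phylogenetic `X`-tree: a finite tree whose leaves (vertices of degree
at most 1) are bijectively labeled by the taxa in `X` and all of whose internal
vertices have degree 3. -/
structure PhyloTree (X : Type*) where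
  V : Type*
  fintypeV : Fintype V
  G : SimpleGraph V
  isTree : G.IsTree
  leaf : X → V
  leaf_inj : Function.Injective leaf
  leaf_iff : ∀ v : V, (G.neighborSet v).ncard ≤ 1 ↔ ∃ x, leaf x = v
  binary : ∀ v : V, (G.neighborSet v).ncard = 1 ∨ (G.neighborSet v).ncard = 3

namespace PhyloTree

variable {X : Type*}

/-- The number of changing edges of an extension `g : V → Bool` on `T`. -/
noncomputable def changingNumber (T : PhyloTree X) (g : T.V → Bool) : ℕ :=
  {e ∈ T.G.edgeSet | ¬ (Sym2.map g e).IsDiag}.ncard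

/-- The parsimony score `l(f,T)` of a binary character `f : X → Bool` on `T`:
the minimal number of changing edges over all extensions of `f` on `T`. -/
noncomputable def parsimony (T : PhyloTree X) (f : X → Bool) : ℕ :=
  sInf {n : ℕ | ∃ g : T.V → Bool, (∀ x : X, g (T.leaf x) = f x) ∧ T.changingNumber g = n}

/-- `A_k(T)`: the set of binary characters with parsimony score `k` on `T`. -/
def Ak (T : PhyloTree X) (k : ℕ) : Set (X → Bool) :=
  {f | T.parsimony f = k}

/-- Leaf-label-preserving isomorphism of phylogenetic `X`-trees. -/
def Isomorphic (T T' : PhyloTree X) : Prop :=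
  ∃ φ : T.G ≃g T'.G, ∀ x : X, φ (T.leaf x) = T'.leaf x

/-- The set of leaf vertices of `T`. -/
def leafSet (T : PhyloTree X) : Set T.V := Set.range T.leaf

/-- The set of taxa lying on the `u`-side of the edge `{u,v}` of `T`. -/
def side (T : PhyloTree X) (u v : T.V) : Set X :=
  {x | (T.G.deleteEdges {s(u, v)}).Reachable (T.leaf x) u}

/-- The split sides of `T`: all taxon sets cut off by some edge of `T`. -/
def splits (T : PhyloTree X) : Set (Set X) :=
  {S | ∃ u v : T.V, T.G.Adj u v ∧ S = T.side u v}

/-- `[x,y]` is a cherry of `T`: two distinct leaves adjacent to the same vertex. -/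
def IsCherry (T : PhyloTree X) (x y : X) : Prop :=
  x ≠ y ∧ ∃ u : T.V, T.G.Adj (T.leaf x) u ∧ T.G.Adj (T.leaf y) u

end PhyloTree

/-- `T'` is the result of a type-1 cherry reduction of the cherry `[x,y]` of `T`
(delete leaf `x`, suppress the resulting degree-2 vertex), characterized via the
split systems (by Buneman's theorem this determines `T'` uniquely). -/
def IsRed1 {X : Type*} (T : PhyloTree X) (x y : X)
    (T' : PhyloTree {z : X // z ≠ x}) : Prop :=
  T.IsCherry x y ∧
  (fun S : Set {z : X // z ≠ x} => Subtype.val '' S) '' T'.splits =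
    {S : Set X | ∃ S' ∈ T.splits, S = S' \ {x}} \ {∅, ({x} : Set X)ᶜ}

/-- `T'` is the result of a type-2 cherry reduction of the cherry `[x,y]` of `T`
(delete leaves `x` and `y` and their common neighbor, suppress the resulting
degree-2 vertex), characterized via the split systems. -/
def IsRed2 {X : Type*} (T : PhyloTree X) (x y : X)
    (T' : PhyloTree {z : X // z ≠ x ∧ z ≠ y}) : Prop :=
  T.IsCherry x y ∧
  (fun S : Set {z : X // z ≠ x ∧ z ≠ y} => Subtype.val '' S) '' T'.splits =
    {S : Set X | ∃ S' ∈ T.splits, S = S' \ {x, y}} \ {∅, ({x, y} : Set X)ᶜ}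

/-- `T'` is an NNI neighbor of `T`: there is an inner edge `{u,v}` of `T`, with
the four subtrees hanging off `u` (via `a₁`, `a₂`) and `v` (via `b₁`, `b₂`),
such that `T'` arises by exchanging the subtree at `a₂` with the one at `b₂`;
characterized via split systems. -/
def IsNNINeighbor {X : Type*} (T T' : PhyloTree X) : Prop :=
  ∃ u v a₁ a₂ b₁ b₂ : T.V,
    T.G.Adj u v ∧ T.G.Adj u a₁ ∧ T.G.Adj u a₂ ∧ T.G.Adj v b₁ ∧ T.G.Adj v b₂ ∧
    a₁ ≠ a₂ ∧ a₁ ≠ v ∧ a₂ ≠ v ∧ b₁ ≠ b₂ ∧ b₁ ≠ u ∧ b₂ ≠ u ∧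
    T'.splits = (T.splits \ {T.side u v, T.side v u}) ∪
      {T.side a₁ u ∪ T.side b₂ v, T.side a₂ u ∪ T.side b₁ v}

/-- An `A`-`B`-path in a graph `G`: a path from a vertex of `A` to a vertex of `B`
none of whose interior vertices lies in `A` or `B`. -/
structure ABPath {V : Type*} (G : SimpleGraph V) (A B : Set V) where
  first : V
  last : V
  walk : G.Walk first last
  isPath : walk.IsPath
  first_mem : first ∈ A
  last_mem : last ∈ B
  interior_not_mem : ∀ v ∈ walk.support.tail.dropLast, v ∉ A ∧ v ∉ B

/-- `S` separates `A` from `B` in `G`: every `A`-`B`-path meets `S`. -/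
def IsSeparator {V : Type*} (G : SimpleGraph V) (A B S : Set V) : Prop :=
  ∀ P : ABPath G A B, ∃ v ∈ P.walk.support, v ∈ S

/-!
The parsimony score `l(f, T)` equals the least number of splits of `T` needed to separate every
pair of taxa on which `f` differs: cutting one edge per split leaves components on which `f` is
constant, and conversely each changing edge of an optimal extension contributes its split.
For a cherry `[x, y]` the only splits separating `x` from `y` are `{x}`, `{y}` and their
complements. So if `f x = f y`, separating families restrict to `X ∖ {x}` and lift back without
loss, giving `l(f, T) = l(f|, T¹)`; if `f x ≠ f y`, one pendant split is needed on top of a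
separating family for `X ∖ {x, y}`, giving `l(f, T) = l(f|, T²) + 1`. Hence `A_k(T)` is
determined by `A_k(T¹)` and `A_{k-1}(T²)`, and likewise for `T̃`.
-/

open Set

section SplitCovers

variable {X : Type*}

lemma Set.Finite.exists_ncard_le_of_forall_exists {α β : Type*} {s : Set α}
    (hs : s.Finite) {r : α → β → Prop} (h : ∀ a ∈ s, ∃ b, r a b) :
    ∃ t : Set β, t.Finite ∧ t.ncard ≤ s.ncard ∧ (∀ a ∈ s, ∃ b ∈ t, r a b) ∧
      ∀ b ∈ t, ∃ a ∈ s, r a b := by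
  rcases s.eq_empty_or_nonempty with rfl | ⟨a₀, ha₀⟩
  · exact ⟨∅, by simp⟩
  have : Nonempty β := ⟨(h a₀ ha₀).choose⟩
  choose! g hg using h
  exact ⟨g '' s, hs.image g, ncard_image_le hs, fun a ha => ⟨g a, mem_image_of_mem g ha, hg a ha⟩,
    fun _ ⟨a, ha, hb⟩ => ⟨a, ha, hb ▸ hg a ha⟩⟩

def SeparatesOn (F : Set (Set X)) (P : Set X) (f : X → Bool) : Prop :=
  ∀ a ∈ P, ∀ b ∈ P, f a ≠ f b → ∃ S ∈ F, (a ∈ S ↔ b ∉ S)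

def IsCover (𝒮 : Set (Set X)) (P : Set X) (f : X → Bool) (F : Set (Set X)) : Prop :=
  F ⊆ 𝒮 ∧ F.Finite ∧ SeparatesOn F P f

noncomputable def coverNum (𝒮 : Set (Set X)) (P : Set X) (f : X → Bool) : ℕ :=
  sInf {n | ∃ F, IsCover 𝒮 P f F ∧ F.ncard = n}

def restrictSplits (𝒮 : Set (Set X)) (R : Set X) : Set (Set X) :=
  {S | ∃ S' ∈ 𝒮, S = S' \ R} \ {∅, Rᶜ}

variable {𝒮 𝒯 F F' : Set (Set X)} {P Q R : Set X} {f : X → Bool}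

lemma SeparatesOn.mono (hF : SeparatesOn F P f) (h : F ⊆ F') : SeparatesOn F' P f :=
  fun a ha b hb hab => let ⟨S, hS, hsep⟩ := hF a ha b hb hab; ⟨S, h hS, hsep⟩

lemma SeparatesOn.univ_of_compl (hF : SeparatesOn F Pᶜ f)
    (hP : ∀ a ∈ P, ∀ b, f a ≠ f b → ∃ S ∈ F, (a ∈ S ↔ b ∉ S)) : SeparatesOn F univ f := by
  intro a _ b _ hab
  by_cases ha : a ∈ P
  · exact hP a ha b hab
  by_cases hb : b ∈ P
  · obtain ⟨S, hS, hsep⟩ := hP b hb a hab.symm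
    exact ⟨S, hS, by tauto⟩
  exact hF a ha b hb hab

lemma separatesOn_image_iff {Y : Type*} {ι : Y → X} (hι : Function.Injective ι)
    {F : Set (Set Y)} : SeparatesOn ((ι '' ·) '' F) (range ι) f ↔ SeparatesOn F univ (f ∘ ι) := by
  simp only [SeparatesOn, forall_mem_range, mem_univ, forall_const, exists_mem_image,
    hι.mem_set_image, Function.comp_apply]

lemma coverNum_le (hF : IsCover 𝒮 P f F) : coverNum 𝒮 P f ≤ F.ncard :=
  Nat.sInf_le ⟨F, hF, rfl⟩

lemma IsCover.exists_ncard_eq_coverNum (hF : IsCover 𝒮 P f F) :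
    ∃ F', IsCover 𝒮 P f F' ∧ F'.ncard = coverNum 𝒮 P f :=
  Nat.sInf_mem (s := {n | ∃ F, IsCover 𝒮 P f F ∧ F.ncard = n}) ⟨_, F, hF, rfl⟩

lemma coverNum_eq_add_of_forall_exists (c : ℕ) (hne : ∃ F, IsCover 𝒮 P f F)
    (hle : ∀ F, IsCover 𝒮 P f F → ∃ F', IsCover 𝒯 Q f F' ∧ F'.ncard + c ≤ F.ncard)
    (hge : ∀ F', IsCover 𝒯 Q f F' → ∃ F, IsCover 𝒮 P f F ∧ F.ncard ≤ F'.ncard + c) :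
    coverNum 𝒮 P f = coverNum 𝒯 Q f + c := by
  obtain ⟨F₀, hF₀⟩ := hne
  obtain ⟨F, hF, hFmin⟩ := hF₀.exists_ncard_eq_coverNum
  obtain ⟨F', hF', hF'le⟩ := hle F hF
  obtain ⟨G', hG', hG'min⟩ := hF'.exists_ncard_eq_coverNum
  obtain ⟨G, hG, hGle⟩ := hge G' hG'
  have := coverNum_le hF'
  have := coverNum_le hG
  omega

lemma coverNum_image {Y : Type*} {ι : Y → X} (hι : Function.Injective ι) (𝒮 : Set (Set Y))
    (f : X → Bool) : coverNum ((ι '' ·) '' 𝒮) (range ι) f = coverNum 𝒮 univ (f ∘ ι) := by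
  have hinj : Function.Injective (ι '' · : Set Y → Set X) := image_injective.2 hι
  unfold coverNum IsCover
  congr 1
  ext n
  constructor
  · rintro ⟨F, ⟨hF, hfin, hsep⟩, rfl⟩
    obtain ⟨F₀, hF₀, rfl⟩ := subset_image_iff.1 hF
    exact ⟨F₀, ⟨hF₀, hfin.of_finite_image hinj.injOn, (separatesOn_image_iff hι).1 hsep⟩,
      (ncard_image_of_injective _ hinj).symm⟩
  · rintro ⟨F₀, ⟨hF₀, hfin, hsep⟩, rfl⟩
    exact ⟨_, ⟨image_mono hF₀, hfin.image _, (separatesOn_image_iff hι).2 hsep⟩,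
      ncard_image_of_injective _ hinj⟩

lemma restrictSplits_mono (h : F ⊆ 𝒮) : restrictSplits F R ⊆ restrictSplits 𝒮 R :=
  fun _ ⟨⟨S, hS, hS'⟩, hntriv⟩ => ⟨⟨S, h hS, hS'⟩, hntriv⟩

lemma restrictSplits_subset_image : restrictSplits F R ⊆ (· \ R) '' F := by
  rintro _ ⟨⟨S, hS, rfl⟩, -⟩
  exact ⟨S, hS, rfl⟩

lemma ncard_restrictSplits_le (hfin : F.Finite) : (restrictSplits F R).ncard ≤ F.ncard :=
  (ncard_le_ncard restrictSplits_subset_image (hfin.image _)).trans (ncard_image_le hfin)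

lemma ncard_restrictSplits_add_one_le (hfin : F.Finite) {S₀ : Set X} (hS₀ : S₀ ∈ F)
    (htriv : S₀ \ R ∈ ({∅, Rᶜ} : Set (Set X))) : (restrictSplits F R).ncard + 1 ≤ F.ncard := by
  have hsub : restrictSplits F R ⊆ (· \ R) '' (F \ {S₀}) := by
    rintro _ ⟨⟨S, hS, rfl⟩, hntriv⟩
    exact ⟨S, ⟨hS, by rintro rfl; exact hntriv htriv⟩, rfl⟩
  have := ncard_le_ncard hsub (hfin.sdiff.image _)
  have := ncard_image_le (f := (· \ R)) (hfin.sdiff (t := {S₀}))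
  have := ncard_sdiff_singleton_add_one hS₀ hfin
  omega

lemma IsCover.restrict (hF : IsCover 𝒮 univ f F) (R : Set X) :
    IsCover (restrictSplits 𝒮 R) Rᶜ f (restrictSplits F R) := by
  obtain ⟨hsub, hfin, hsep⟩ := hF
  refine ⟨restrictSplits_mono hsub, (hfin.image _).subset restrictSplits_subset_image,
    fun a ha b hb hab => ?_⟩
  obtain ⟨S, hS, hsepS⟩ := hsep a trivial b trivial hab
  rw [mem_compl_iff] at ha hb
  refine ⟨S \ R, ⟨⟨S, hS, rfl⟩, ?_⟩, by simpa [ha, hb] using hsepS⟩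
  have hmem : a ∈ S \ R ∨ b ∈ S \ R := by simp only [mem_sdiff, ha, hb]; tauto
  have hnmem : a ∉ S \ R ∨ b ∉ S \ R := by simp only [mem_sdiff, ha, hb]; tauto
  rintro (h | h) <;> rw [h] at hmem hnmem <;> simp_all

lemma IsCover.lift {C : Set X → Prop} (hF' : IsCover (restrictSplits 𝒮 R) Rᶜ f F')
    (hlift : ∀ S' ∈ restrictSplits 𝒮 R, ∃ S ∈ 𝒮, C S ∧ S \ R = S') :
    ∃ F, IsCover 𝒮 Rᶜ f F ∧ F.ncard ≤ F'.ncard ∧ ∀ S ∈ F, C S := by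
  obtain ⟨hsub, hfin, hsep⟩ := hF'
  obtain ⟨F, hFfin, hcard, hcov, hback⟩ := hfin.exists_ncard_le_of_forall_exists
    (r := fun S' S => S ∈ 𝒮 ∧ C S ∧ S \ R = S') fun S' hS' => by
      obtain ⟨S, hS, hCS, hSR⟩ := hlift S' (hsub hS')
      exact ⟨S, hS, hCS, hSR⟩
  refine ⟨F, ⟨fun S hS => ?_, hFfin, fun a ha b hb hab => ?_⟩, hcard,
    fun S hS => (hback S hS).elim fun _ h => h.2.2.1⟩
  · obtain ⟨_, -, hS𝒮, -⟩ := hback S hS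
    exact hS𝒮
  obtain ⟨S', hS', hsepS'⟩ := hsep a ha b hb hab
  obtain ⟨S, hS, -, -, rfl⟩ := hcov S' hS'
  rw [mem_compl_iff] at ha hb
  exact ⟨S, hS, by simpa [ha, hb] using hsepS'⟩

end SplitCovers

section CherrySplits

variable {X : Type*}

structure IsCherrySplits (𝒮 : Set (Set X)) (x y : X) : Prop where
  ne : x ≠ y
  singleton_left_mem : {x} ∈ 𝒮
  singleton_right_mem : {y} ∈ 𝒮
  pair_mem : {x, y} ∈ 𝒮
  compl_pair_mem : {x, y}ᶜ ∈ 𝒮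
  eq_of_separates : ∀ S ∈ 𝒮, (x ∈ S ↔ y ∉ S) → S = {x} ∨ S = {x}ᶜ ∨ S = {y} ∨ S = {y}ᶜ

lemma SeparatesOn.exists_insert_singleton {F : Set (Set X)} {x y : X} {f : X → Bool}
    (hf : f x ≠ f y) (hF : SeparatesOn F {x, y}ᶜ f) (hxy : ∀ S ∈ F, x ∈ S ↔ y ∈ S) :
    ∃ z ∈ ({x, y} : Set X), SeparatesOn (insert {z} F) univ f := by
  have hne : x ≠ y := fun h => hf (congrArg f h)
  have hF' (z : X) := (hF.mono (subset_insert {z} F)).univ_of_compl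
  -- if `F` leaves some taxon of the colour of `x` together with `x`, cut off `y`, else `x`
  by_cases hK : ∃ b ∉ ({x, y} : Set X), f b = f x ∧ ∀ S ∈ F, b ∈ S ↔ x ∈ S
  · obtain ⟨b₀, hb₀, hfb₀, hb₀x⟩ := hK
    refine ⟨y, by simp, hF' y ?_⟩
    rintro a (rfl | rfl) b hab
    · by_cases hb : b = y
      · exact ⟨{y}, mem_insert _ _, by simp [hb, hne]⟩
      have hb' : b ∉ ({a, y} : Set X) := by rintro (rfl | rfl) <;> tauto
      obtain ⟨S, hS, hsep⟩ := hF b₀ hb₀ b hb' (hfb₀.trans_ne hab)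
      exact ⟨S, mem_insert_of_mem _ hS, by have := hb₀x S hS; tauto⟩
    · exact ⟨{a}, mem_insert _ _, by simpa using fun h => hab (congrArg f h.symm)⟩
  · refine ⟨x, by simp, hF' x ?_⟩
    rintro a (rfl | rfl) b hab
    · exact ⟨{a}, mem_insert _ _, by simpa using fun h => hab (congrArg f h.symm)⟩
    · by_cases hb : b = x
      · exact ⟨{x}, mem_insert _ _, by simp [hb, hne.symm]⟩
      have hb' : b ∉ ({x, a} : Set X) := by rintro (rfl | rfl) <;> tauto
      have hfb : f b = f x := by
        cases hfa : f a <;> cases hfb : f b <;> cases hfx : f x <;> simp_all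
      push Not at hK
      obtain ⟨S, hS, hbS⟩ := hK b hb' hfb
      exact ⟨S, mem_insert_of_mem _ hS, by have := hxy S hS; tauto⟩

namespace IsCherrySplits

variable {𝒮 : Set (Set X)} {x y : X} {f : X → Bool} (h : IsCherrySplits 𝒮 x y)
include h

lemma singleton_mem {z : X} (hz : z ∈ ({x, y} : Set X)) : {z} ∈ 𝒮 := by
  rcases hz with rfl | rfl
  exacts [h.singleton_left_mem, h.singleton_right_mem]

lemma sdiff_pair_mem_of_separates {S : Set X} (hS : S ∈ 𝒮) (hsep : x ∈ S ↔ y ∉ S) :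
    S \ {x, y} ∈ ({∅, {x, y}ᶜ} : Set (Set X)) := by
  rcases h.eq_of_separates S hS hsep with rfl | rfl | rfl | rfl <;>
    [left; right; left; right] <;> ext z <;> simp <;> tauto

lemma exists_lift_singleton {S' : Set X} (hS' : S' ∈ restrictSplits 𝒮 {x}) :
    ∃ S ∈ 𝒮, (x ∈ S ↔ y ∈ S) ∧ S \ {x} = S' := by
  obtain ⟨⟨S, hS, rfl⟩, hntriv⟩ := hS'
  by_cases hsep : x ∈ S ↔ y ∉ S
  swap
  · exact ⟨S, hS, by tauto, rfl⟩
  have hxy := h.ne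
  rcases h.eq_of_separates S hS hsep with rfl | rfl | rfl | rfl
  · simp at hntriv
  · simp at hntriv
  · exact ⟨{x, y}, h.pair_mem, by simp, by ext z; simp⟩
  · exact ⟨{x, y}ᶜ, h.compl_pair_mem, by simp, by ext z; simp; tauto⟩

lemma exists_lift_pair {S' : Set X} (hS' : S' ∈ restrictSplits 𝒮 {x, y}) :
    ∃ S ∈ 𝒮, (x ∈ S ↔ y ∈ S) ∧ S \ {x, y} = S' := by
  obtain ⟨⟨S, hS, rfl⟩, hntriv⟩ := hS'
  refine ⟨S, hS, ?_, rfl⟩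
  by_contra hsep
  exact hntriv (h.sdiff_pair_mem_of_separates hS (by tauto))

lemma coverNum_eq_of_eq (hf : f x = f y) (hne : ∃ F, IsCover 𝒮 univ f F) :
    coverNum 𝒮 univ f = coverNum (restrictSplits 𝒮 {x}) {x}ᶜ f := by
  refine coverNum_eq_add_of_forall_exists 0 hne
    (fun F hF => ⟨_, hF.restrict {x}, ncard_restrictSplits_le hF.2.1⟩) fun F' hF' => ?_
  obtain ⟨F, ⟨hsub, hfin, hsep⟩, hcard, hxy⟩ := hF'.lift fun _ => h.exists_lift_singleton
  refine ⟨F, ⟨hsub, hfin, hsep.univ_of_compl ?_⟩, hcard⟩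
  -- `x` is separated from `b` by whatever separates `y` from `b`
  rintro a rfl b hab
  obtain ⟨S, hS, hsepS⟩ := hsep y h.ne.symm b (by rintro rfl; exact hab rfl) (hf ▸ hab)
  exact ⟨S, hS, by have := hxy S hS; tauto⟩

lemma coverNum_eq_of_ne (hf : f x ≠ f y) (hne : ∃ F, IsCover 𝒮 univ f F) :
    coverNum 𝒮 univ f = coverNum (restrictSplits 𝒮 {x, y}) {x, y}ᶜ f + 1 := by
  refine coverNum_eq_add_of_forall_exists 1 hne (fun F hF => ?_) fun F' hF' => ?_
  · obtain ⟨S₀, hS₀, hsep⟩ := hF.2.2 x trivial y trivial hf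
    exact ⟨_, hF.restrict _,
      ncard_restrictSplits_add_one_le hF.2.1 hS₀ (h.sdiff_pair_mem_of_separates (hF.1 hS₀) hsep)⟩
  · obtain ⟨F, ⟨hsub, hfin, hsep⟩, hcard, hxy⟩ := hF'.lift fun _ => h.exists_lift_pair
    obtain ⟨z, hz, hsepz⟩ := hsep.exists_insert_singleton hf hxy
    exact ⟨insert {z} F, ⟨insert_subset (h.singleton_mem hz) hsub, hfin.insert _, hsepz⟩,
      (ncard_insert_le _ _).trans (by omega)⟩

end IsCherrySplits

end CherrySplits

namespace SimpleGraph

variable {V : Type*} {G : SimpleGraph V}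

lemma Reachable.mem_of_forall_adj_mem {C : Set V} (hC : ∀ c ∈ C, ∀ w, G.Adj c w → w ∈ C)
    {a b : V} (h : G.Reachable a b) (ha : a ∈ C) : b ∈ C := by
  obtain ⟨p⟩ := h
  induction p with
  | nil => exact ha
  | cons hadj _ ih => exact ih (hC _ ha _ hadj)

lemma Walk.reachable_deleteEdges_or {a u : V} (p : G.Walk a u) (v : V) :
    (G.deleteEdges {s(u, v)}).Reachable a u ∨ (G.deleteEdges {s(u, v)}).Reachable a v := by
  induction p with
  | nil => exact .inl .rfl
  | @cons a b u hab _ ih =>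
    by_cases he : s(a, b) = s(u, v)
    · rcases Sym2.eq_iff.1 he with ⟨rfl, -⟩ | ⟨rfl, -⟩
      exacts [.inl .rfl, .inr .rfl]
    · have hab' : (G.deleteEdges {s(u, v)}).Adj a b := (deleteEdges_adj ..).2 ⟨hab, he⟩
      exact ih.imp hab'.reachable.trans hab'.reachable.trans

lemma Walk.IsPath.exists_adj_reachable_deleteEdges {β : Type*} (g : V → β) {a b : V}
    {p : G.Walk a b} (hp : p.IsPath) (hab : g a ≠ g b) :
    ∃ u v, G.Adj u v ∧ g u ≠ g v ∧
      (G.deleteEdges {s(u, v)}).Reachable a u ∧ (G.deleteEdges {s(u, v)}).Reachable b v := by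
  induction p with
  | nil => exact absurd rfl hab
  | @cons a c b hac p ih =>
    rw [Walk.cons_isPath_iff] at hp
    by_cases hg : g a = g c
    · obtain ⟨u, v, huv, hguv, hcu, hbv⟩ := ih hp.1 (hg ▸ hab)
      have hne : s(a, c) ≠ s(u, v) := by
        rw [Ne, Sym2.eq_iff]
        rintro (⟨rfl, rfl⟩ | ⟨rfl, rfl⟩) <;> simp_all
      exact ⟨u, v, huv, hguv, ((deleteEdges_adj ..).2 ⟨hac, hne⟩).reachable.trans hcu, hbv⟩
    · -- the rest of the path avoids `a`, hence the edge `s(a, c)`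
      refine ⟨a, c, hac, hg, .rfl, (p.toDeleteEdges {s(a, c)} fun e he hea => ?_).reverse.reachable⟩
      rw [mem_singleton_iff] at hea
      exact hp.2 (p.fst_mem_support_of_mem_edges (hea ▸ he))

end SimpleGraph

namespace PhyloTree

variable {X : Type*}

instance {T : PhyloTree X} : Fintype T.V := T.fintypeV

variable (T : PhyloTree X)

lemma not_reachable_deleteEdges_of_adj {u v : T.V} (h : T.G.Adj u v) :
    ¬ (T.G.deleteEdges {s(u, v)}).Reachable u v :=
  isBridge_iff.1 (isAcyclic_iff_forall_adj_isBridge.1 T.isTree.isAcyclic h)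

lemma mem_side_swap {u v : T.V} {a : X} :
    a ∈ T.side v u ↔ (T.G.deleteEdges {s(u, v)}).Reachable (T.leaf a) v := by
  rw [side, Sym2.eq_swap]
  rfl

lemma side_swap {u v : T.V} (h : T.G.Adj u v) : T.side v u = (T.side u v)ᶜ := by
  ext a
  rw [mem_side_swap, mem_compl_iff]
  obtain ⟨p⟩ := T.isTree.connected.preconnected (T.leaf a) u
  exact ⟨fun hv hu => T.not_reachable_deleteEdges_of_adj h (hu.symm.trans hv),
    (p.reachable_deleteEdges_or v).resolve_left⟩

lemma mem_side_iff_of_reachable {u v : T.V} {a b : X} {E : Set (Sym2 T.V)} (hE : s(u, v) ∈ E)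
    (h : (T.G.deleteEdges E).Reachable (T.leaf a) (T.leaf b)) :
    a ∈ T.side u v ↔ b ∈ T.side u v := by
  have h' := h.mono (deleteEdges_anti (singleton_subset_iff.2 hE))
  exact ⟨h'.symm.trans, h'.trans⟩

lemma parsimony_le {f : X → Bool} {g : T.V → Bool} (hg : ∀ x, g (T.leaf x) = f x) :
    T.parsimony f ≤ T.changingNumber g :=
  Nat.sInf_le ⟨g, hg, rfl⟩

lemma exists_changingNumber_eq_parsimony (f : X → Bool) :
    ∃ g : T.V → Bool, (∀ x, g (T.leaf x) = f x) ∧ T.changingNumber g = T.parsimony f :=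
  Nat.sInf_mem (s := {n | ∃ g : T.V → Bool, (∀ x, g (T.leaf x) = f x) ∧ T.changingNumber g = n})
    ⟨_, Function.extend T.leaf f fun _ => false, T.leaf_inj.extend_apply f _, rfl⟩

lemma parsimony_le_ncard_of_forall_not_reachable {f : X → Bool} {E : Set (Sym2 T.V)}
    (hE : ∀ a b, f a ≠ f b → ¬ (T.G.deleteEdges E).Reachable (T.leaf a) (T.leaf b)) :
    T.parsimony f ≤ E.ncard := by
  classical
  set H := T.G.deleteEdges E
  let g : T.V → Bool := fun w => decide (∃ a, f a = true ∧ H.Reachable (T.leaf a) w)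
  have hconst (u v : T.V) (huv : H.Reachable u v) : g u = g v := by
    simp only [g, decide_eq_decide]
    exact ⟨fun ⟨a, ha, hr⟩ => ⟨a, ha, hr.trans huv⟩, fun ⟨a, ha, hr⟩ => ⟨a, ha, hr.trans huv.symm⟩⟩
  have hg (x : X) : g (T.leaf x) = f x := by
    cases hx : f x
    · simp only [g, decide_eq_false_iff_not, not_exists, not_and]
      exact fun a ha => hE a x (by simp [ha, hx])
    · simpa [g] using ⟨x, hx, .rfl⟩
  refine (T.parsimony_le hg).trans (ncard_le_ncard fun e he => ?_)
  induction e with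
  | h u v =>
    by_contra huv
    exact he.2 (by simpa using hconst u v ((deleteEdges_adj ..).2 ⟨he.1, huv⟩).reachable)

lemma exists_isCover_of_extension {f : X → Bool} {g : T.V → Bool}
    (hg : ∀ x, g (T.leaf x) = f x) :
    ∃ F, IsCover T.splits univ f F ∧ F.ncard ≤ T.changingNumber g := by
  obtain ⟨F, hfin, hcard, hcov, hback⟩ :=
    (toFinite {e ∈ T.G.edgeSet | ¬ (Sym2.map g e).IsDiag}).exists_ncard_le_of_forall_exists
      (r := fun e S => ∃ u v, e = s(u, v) ∧ S = T.side u v)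
      fun e _ => by induction e with | h u v => exact ⟨_, u, v, rfl, rfl⟩
  refine ⟨F, ⟨fun S hS => ?_, hfin, fun a _ b _ hab => ?_⟩, hcard⟩
  · obtain ⟨e, he, u, v, rfl, rfl⟩ := hback S hS
    exact ⟨u, v, he.1, rfl⟩
  obtain ⟨p, hp⟩ := T.isTree.connected.exists_isPath (T.leaf a) (T.leaf b)
  obtain ⟨u, v, huv, hguv, ha, hbv⟩ :=
    hp.exists_adj_reachable_deleteEdges g (by simpa [hg] using hab)
  obtain ⟨S, hS, u', v', he, rfl⟩ := hcov s(u, v) ⟨huv, by simpa using hguv⟩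
  replace ha : a ∈ T.side u v := ha
  have hb : b ∈ (T.side u v)ᶜ := T.side_swap huv ▸ T.mem_side_swap.2 hbv
  refine ⟨_, hS, ?_⟩
  rcases Sym2.eq_iff.1 he with ⟨rfl, rfl⟩ | ⟨rfl, rfl⟩
  · exact iff_of_true ha hb
  · rw [T.side_swap huv]
    exact iff_of_false (not_not.2 ha) (not_not.2 hb)

lemma parsimony_le_of_isCover {f : X → Bool} {F : Set (Set X)}
    (hF : IsCover T.splits univ f F) : T.parsimony f ≤ F.ncard := by
  obtain ⟨E, -, hcard, hcov, -⟩ := hF.2.1.exists_ncard_le_of_forall_exists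
    (r := fun S e => ∃ u v, e = s(u, v) ∧ S = T.side u v) fun S hS => by
      obtain ⟨u, v, -, rfl⟩ := hF.1 hS
      exact ⟨_, u, v, rfl, rfl⟩
  refine (T.parsimony_le_ncard_of_forall_not_reachable fun a b hab hr => ?_).trans hcard
  obtain ⟨S, hS, hsep⟩ := hF.2.2 a trivial b trivial hab
  obtain ⟨_, he, u, v, rfl, rfl⟩ := hcov S hS
  have := T.mem_side_iff_of_reachable he hr
  tauto

lemma exists_isCover (f : X → Bool) : ∃ F, IsCover T.splits univ f F :=
  let ⟨_, hg, _⟩ := T.exists_changingNumber_eq_parsimony f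
  (T.exists_isCover_of_extension hg).imp fun _ h => h.1

theorem parsimony_eq_coverNum (f : X → Bool) : T.parsimony f = coverNum T.splits univ f := by
  obtain ⟨g, hg, hgmin⟩ := T.exists_changingNumber_eq_parsimony f
  obtain ⟨F, hF, hcard⟩ := T.exists_isCover_of_extension hg
  obtain ⟨F', hF', hF'min⟩ := hF.exists_ncard_eq_coverNum
  have := coverNum_le hF
  have := T.parsimony_le_of_isCover hF'
  omega

variable {T}

lemma eq_of_adj_leaf {z : X} {p w : T.V} (hp : T.G.Adj (T.leaf z) p)
    (hw : T.G.Adj (T.leaf z) w) : w = p :=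
  (ncard_le_one_iff (toFinite _)).1 ((T.leaf_iff _).2 ⟨z, rfl⟩) hw hp

lemma side_leaf {z : X} {p : T.V} (hp : T.G.Adj (T.leaf z) p) : T.side (T.leaf z) p = {z} := by
  ext a
  refine ⟨fun ha => T.leaf_inj (ha.symm.mem_of_forall_adj_mem (C := {T.leaf z}) ?_ rfl),
    by rintro rfl; exact .rfl⟩
  rintro _ rfl w hw
  rw [deleteEdges_adj, eq_of_adj_leaf hp hw.1] at hw
  exact absurd rfl hw.2

lemma exists_third_neighbor {x y : X} (hxy : x ≠ y) {p : T.V} (hxp : T.G.Adj (T.leaf x) p)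
    (hyp : T.G.Adj (T.leaf y) p) :
    ∃ q, T.G.Adj p q ∧ q ≠ T.leaf x ∧ q ≠ T.leaf y ∧
      (∀ w, T.G.Adj p w → w = T.leaf x ∨ w = T.leaf y ∨ w = q) ∧ ∀ a, T.leaf a ≠ p := by
  have hlxy : T.leaf x ≠ T.leaf y := T.leaf_inj.ne hxy
  have hpair : {T.leaf x, T.leaf y} ⊆ T.G.neighborSet p := by
    rintro _ (rfl | rfl)
    exacts [hxp.symm, hyp.symm]
  have hdeg : (T.G.neighborSet p).ncard = 3 := by
    have := ncard_le_ncard hpair (toFinite _)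
    rw [ncard_pair hlxy] at this
    exact (T.binary p).resolve_left (by omega)
  obtain ⟨q, hq, hqxy⟩ := not_subset.1 fun h : T.G.neighborSet p ⊆ {T.leaf x, T.leaf y} => by
    have := ncard_le_ncard h (toFinite _)
    rw [ncard_pair hlxy] at this
    omega
  simp only [mem_insert_iff, mem_singleton_iff, not_or] at hqxy
  have htriple : {T.leaf x, T.leaf y, q} = T.G.neighborSet p := by
    refine eq_of_subset_of_ncard_le (insert_subset hxp.symm (insert_subset hyp.symm
      (singleton_subset_iff.2 hq))) ?_ (toFinite _)
    rw [hdeg, ncard_insert_of_notMem (by simp [hlxy, Ne.symm hqxy.1]), ncard_pair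
      (Ne.symm hqxy.2)]
  refine ⟨q, hq, hqxy.1, hqxy.2, fun w hw => ?_, fun a ha => ?_⟩
  · have hw' : w ∈ T.G.neighborSet p := hw
    rw [← htriple] at hw'
    simpa using hw'
  · have := (T.leaf_iff p).2 ⟨a, ha⟩
    omega

lemma side_cherry {x y : X} {p q : T.V} (hxp : T.G.Adj (T.leaf x) p)
    (hyp : T.G.Adj (T.leaf y) p) (hqx : q ≠ T.leaf x) (hqy : q ≠ T.leaf y)
    (hall : ∀ w, T.G.Adj p w → w = T.leaf x ∨ w = T.leaf y ∨ w = q) (hp : ∀ a, T.leaf a ≠ p) :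
    T.side p q = {x, y} := by
  have hadj {z : X} (hzp : T.G.Adj (T.leaf z) p) (hqz : q ≠ T.leaf z) :
      (T.G.deleteEdges {s(p, q)}).Reachable (T.leaf z) p :=
    ((deleteEdges_adj ..).2 ⟨hzp, by simp [hp z, Ne.symm hqz]⟩).reachable
  ext a
  refine ⟨fun ha => ?_, ?_⟩
  · have hC : ∀ c ∈ ({p, T.leaf x, T.leaf y} : Set T.V), ∀ w,
        (T.G.deleteEdges {s(p, q)}).Adj c w → w ∈ ({p, T.leaf x, T.leaf y} : Set T.V) := by
      rintro c (rfl | rfl | rfl) w hw <;> rw [deleteEdges_adj] at hw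
      · rcases hall w hw.1 with rfl | rfl | rfl
        · simp
        · simp
        · exact absurd rfl hw.2
      · simp [eq_of_adj_leaf hxp hw.1]
      · simp [eq_of_adj_leaf hyp hw.1]
    rcases ha.symm.mem_of_forall_adj_mem hC (mem_insert _ _) with h | h | h
    · exact absurd h (hp a)
    · exact .inl (T.leaf_inj h)
    · exact .inr (T.leaf_inj h)
  · rintro (rfl | rfl)
    exacts [hadj hxp hqx, hadj hyp hqy]

lemma side_eq_of_separates {x y : X} {p u v : T.V} (hxp : T.G.Adj (T.leaf x) p)
    (hyp : T.G.Adj (T.leaf y) p) (huv : T.G.Adj u v)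
    (hsep : x ∈ T.side u v ↔ y ∉ T.side u v) :
    T.side u v = {x} ∨ T.side u v = {x}ᶜ ∨ T.side u v = {y} ∨ T.side u v = {y}ᶜ := by
  by_cases hx : s(u, v) = s(T.leaf x, p)
  · rcases Sym2.eq_iff.1 hx with ⟨rfl, rfl⟩ | ⟨rfl, rfl⟩
    · exact .inl (side_leaf hxp)
    · exact .inr (.inl (by rw [T.side_swap hxp, side_leaf hxp]))
  by_cases hy : s(u, v) = s(T.leaf y, p)
  · rcases Sym2.eq_iff.1 hy with ⟨rfl, rfl⟩ | ⟨rfl, rfl⟩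
    · exact .inr (.inr (.inl (side_leaf hyp)))
    · exact .inr (.inr (.inr (by rw [T.side_swap hyp, side_leaf hyp])))
  -- otherwise `x` and `y` stay joined through `p` once `s(u, v)` is deleted
  have hr : (T.G.deleteEdges {s(u, v)}).Reachable (T.leaf x) (T.leaf y) :=
    ((deleteEdges_adj ..).2 ⟨hxp, fun h => hx h.symm⟩).reachable.trans
      ((deleteEdges_adj ..).2 ⟨hyp.symm, fun h => hy (h.symm.trans Sym2.eq_swap)⟩).reachable
  have := T.mem_side_iff_of_reachable (mem_singleton _) hr
  tauto

theorem IsCherry.isCherrySplits {x y : X} (h : T.IsCherry x y) : IsCherrySplits T.splits x y := by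
  obtain ⟨hxy, p, hxp, hyp⟩ := h
  obtain ⟨q, hpq, hqx, hqy, hall, hp⟩ := exists_third_neighbor hxy hxp hyp
  have hpair := side_cherry hxp hyp hqx hqy hall hp
  exact {
    ne := hxy
    singleton_left_mem := ⟨_, _, hxp, (side_leaf hxp).symm⟩
    singleton_right_mem := ⟨_, _, hyp, (side_leaf hyp).symm⟩
    pair_mem := ⟨p, q, hpq, hpair.symm⟩
    compl_pair_mem := ⟨q, p, hpq.symm, by rw [T.side_swap hpq, hpair]⟩
    eq_of_separates := by
      rintro _ ⟨u, v, huv, rfl⟩ hsep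
      exact side_eq_of_separates hxp hyp huv hsep }

end PhyloTree

section Reductions

variable {X : Type*} {T : PhyloTree X} {x y : X} {f : X → Bool}

lemma IsRed1.parsimony_eq {T1 : PhyloTree {z : X // z ≠ x}} (h : IsRed1 T x y T1)
    (hf : f x = f y) : T.parsimony f = T1.parsimony (f ∘ Subtype.val) := by
  have hsplits : (Subtype.val '' ·) '' T1.splits = restrictSplits T.splits {x} := h.2
  have hrange : range (Subtype.val : {z // z ≠ x} → X) = {x}ᶜ := by ext; simp
  rw [T.parsimony_eq_coverNum, h.1.isCherrySplits.coverNum_eq_of_eq hf (T.exists_isCover f),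
    T1.parsimony_eq_coverNum, ← coverNum_image Subtype.val_injective, hsplits, hrange]

lemma IsRed2.parsimony_eq {T2 : PhyloTree {z : X // z ≠ x ∧ z ≠ y}} (h : IsRed2 T x y T2)
    (hf : f x ≠ f y) : T.parsimony f = T2.parsimony (f ∘ Subtype.val) + 1 := by
  have hsplits : (Subtype.val '' ·) '' T2.splits = restrictSplits T.splits {x, y} := h.2
  have hrange : range (Subtype.val : {z // z ≠ x ∧ z ≠ y} → X) = {x, y}ᶜ := by ext; simp
  rw [T.parsimony_eq_coverNum, h.1.isCherrySplits.coverNum_eq_of_ne hf (T.exists_isCover f),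
    T2.parsimony_eq_coverNum, ← coverNum_image Subtype.val_injective, hsplits, hrange]

end Reductions

theorem stmt_9_general {X : Type*} (k : ℕ)
    (T T' : PhyloTree X) (x y : X)
    (T1 : PhyloTree {z : X // z ≠ x}) (T1' : PhyloTree {z : X // z ≠ x})
    (T2 : PhyloTree {z : X // z ≠ x ∧ z ≠ y}) (T2' : PhyloTree {z : X // z ≠ x ∧ z ≠ y})
    (h1 : IsRed1 T x y T1) (h1' : IsRed1 T' x y T1')
    (h2 : IsRed2 T x y T2) (h2' : IsRed2 T' x y T2')
    (hA1 : T1.Ak k = T1'.Ak k) (hA2 : T2.Ak (k - 1) = T2'.Ak (k - 1)) :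
    T.Ak k = T'.Ak k := by
  ext f
  change T.parsimony f = k ↔ T'.parsimony f = k
  by_cases hf : f x = f y
  · rw [h1.parsimony_eq hf, h1'.parsimony_eq hf]
    exact Set.ext_iff.1 hA1 (f ∘ Subtype.val)
  · rw [h2.parsimony_eq hf, h2'.parsimony_eq hf]
    have : T2.parsimony (f ∘ Subtype.val) = k - 1 ↔ T2'.parsimony (f ∘ Subtype.val) = k - 1 :=
      Set.ext_iff.1 hA2 (f ∘ Subtype.val)
    omega

/-- if `T'` is an NNI neighbor of `T`, `[x,y]` is a cherry of both
trees, and the type-1 and type-2 cherry reductions of the two trees satisfy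
`A_k(T¹) = A_k(T̃¹)` and `A_{k-1}(T²) = A_{k-1}(T̃²)`, then `A_k(T) = A_k(T̃)`. -/
theorem stmt_9 {X : Type*} [Fintype X] (k : ℕ) (hk : 2 ≤ k)
    (T T' : PhyloTree X) (hNNI : IsNNINeighbor T T') (x y : X)
    (hcherry : T.IsCherry x y) (hcherry' : T'.IsCherry x y)
    (T1 : PhyloTree {z : X // z ≠ x}) (T1' : PhyloTree {z : X // z ≠ x})
    (T2 : PhyloTree {z : X // z ≠ x ∧ z ≠ y}) (T2' : PhyloTree {z : X // z ≠ x ∧ z ≠ y})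
    (h1 : IsRed1 T x y T1) (h1' : IsRed1 T' x y T1')
    (h2 : IsRed2 T x y T2) (h2' : IsRed2 T' x y T2')
    (hA1 : T1.Ak k = T1'.Ak k) (hA2 : T2.Ak (k - 1) = T2'.Ak (k - 1)) :
    T.Ak k = T'.Ak k :=
  stmt_9_general k T T' x y T1 T1' T2 T2' h1 h1' h2 h2' hA1 hA2
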